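/- If p ≠ 0, then τ is a linear automorphism of V ⊗ V, with inverse p⁻¹·(τ − (p − 1)·id); that is, τ ∘ (p⁻¹·(τ − (p−1)·id)) = id and (p⁻¹·(τ − (p−1)·id)) ∘ τ = id. -/

import Mathlib

open scoped TensorProduct

set_option maxSynthPendingDepth 2

/-- Heaviside theta symbol: `theta a b = 1` if `a > b`, else `0`. -/
def theta {ι : Type*} [LinearOrder ι] (a b : ι) : ℕ := if b < a then 1 else 0

/-! An element `t` satisfying the Hecke relation `t² = (p - 1) t + p` has inverse
`p⁻¹ (t - (p - 1))`. On the basis `e a ⊗ e b` of `V ⊗ V`, the map `τ` preserves the span of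
`e a ⊗ e b` and `e b ⊗ e a`, so the Hecke relation for `τ` reduces to a `2 × 2` computation in
each of the cases `a < b`, `a = b`, `a > b`. -/

section Hecke

variable {F A : Type*} [Field F] [Ring A] [Algebra F A] {p : F} {t : A}

theorem mul_smul_sub_eq_one_of_hecke (hp : p ≠ 0) (ht : t * t = (p - 1) • t + p • 1) :
    t * (p⁻¹ • (t - (p - 1) • 1)) = 1 := by
  rw [mul_smul_comm, mul_sub, mul_smul_comm, mul_one, ht, add_sub_cancel_left, smul_smul,
    inv_mul_cancel₀ hp, one_smul]

theorem smul_sub_mul_eq_one_of_hecke (hp : p ≠ 0) (ht : t * t = (p - 1) • t + p • 1) :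
    (p⁻¹ • (t - (p - 1) • 1)) * t = 1 := by
  rw [smul_mul_assoc, sub_mul, smul_mul_assoc, one_mul, ht, add_sub_cancel_left, smul_smul,
    inv_mul_cancel₀ hp, one_smul]

end Hecke

section Theta

variable {ι : Type*} [LinearOrder ι] {a b : ι}

theorem theta_self (a : ι) : theta a a = 0 := if_neg (lt_irrefl a)

theorem theta_of_lt (h : a < b) : theta a b = 0 := if_neg (not_lt.2 h.le)

theorem theta_of_gt (h : b < a) : theta a b = 1 := if_pos h

end Theta

theorem tau_mul_self_eq {F ι : Type*} [Field F] [LinearOrder ι] {p : F}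
    {τ : ((ι →₀ F) ⊗[F] (ι →₀ F)) →ₗ[F] ((ι →₀ F) ⊗[F] (ι →₀ F))}
    (hτ : ∀ a b : ι,
      τ (Finsupp.single a 1 ⊗ₜ[F] Finsupp.single b 1) =
        (p ^ theta a b - 1) • (Finsupp.single a 1 ⊗ₜ[F] Finsupp.single b 1)
          - p ^ theta b a • (Finsupp.single b 1 ⊗ₜ[F] Finsupp.single a 1)) :
    τ * τ = (p - 1) • τ + p • 1 := by
  ext a b
  simp only [LinearMap.comp_apply, Finsupp.lsingle_apply,
    TensorProduct.AlgebraTensorModule.curry_apply, TensorProduct.curry_apply,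
    LinearMap.coe_restrictScalars, Module.End.mul_apply, LinearMap.add_apply,
    LinearMap.smul_apply, Module.End.one_apply]
  rw [hτ a b, map_sub, map_smul, map_smul, hτ a b, hτ b a]
  rcases lt_trichotomy a b with h | rfl | h
  · rw [theta_of_lt h, theta_of_gt h]
    module
  · rw [theta_self]
    module
  · rw [theta_of_gt h, theta_of_lt h]
    module

/-- If `p ≠ 0`, then `τ` is invertible on `V ⊗ V`, with inverse `p⁻¹·(τ − (p−1)·id)`. -/
theorem tau_invertible (F : Type*) [Field F] (p : F) (hp : p ≠ 0) (ι : Type*) [LinearOrder ι]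
    (τ : ((ι →₀ F) ⊗[F] (ι →₀ F)) →ₗ[F] ((ι →₀ F) ⊗[F] (ι →₀ F)))
    (hτ : ∀ a b : ι,
      τ (Finsupp.single a 1 ⊗ₜ[F] Finsupp.single b 1) =
        (p ^ theta a b - 1) • (Finsupp.single a 1 ⊗ₜ[F] Finsupp.single b 1)
          - p ^ theta b a • (Finsupp.single b 1 ⊗ₜ[F] Finsupp.single a 1)) :
    τ ∘ₗ (p⁻¹ • (τ - (p - 1) •
        (LinearMap.id : ((ι →₀ F) ⊗[F] (ι →₀ F)) →ₗ[F] ((ι →₀ F) ⊗[F] (ι →₀ F))))) =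
      LinearMap.id ∧
    (p⁻¹ • (τ - (p - 1) •
        (LinearMap.id : ((ι →₀ F) ⊗[F] (ι →₀ F)) →ₗ[F] ((ι →₀ F) ⊗[F] (ι →₀ F))))) ∘ₗ τ =
      LinearMap.id := by
  have hecke := tau_mul_self_eq hτ
  exact ⟨mul_smul_sub_eq_one_of_hecke (t := τ) hp hecke,
    smul_sub_mul_eq_one_of_hecke (t := τ) hp hecke⟩
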